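/- Let u : ℝ → ℂ be three times continuously differentiable and 1-periodic (u(x+1) = u(x) for all x ∈ ℝ). Then ∫₀¹ (u(x)·u'''(x) - 3·u(x)³·u'(x)) dx = 0. -/

import Mathlib

/-!
Both terms of the integrand are exact derivatives of periodic functions:
`u u''' = (u u'' - u'² / 2)'` and `u³ u' = (u⁴ / 4)'`.
By the fundamental theorem of calculus their integrals over a period vanish.
-/

open Function intervalIntegral

section Periodic

variable {𝕜 F : Type*} [NontriviallyNormedField 𝕜] [NormedAddCommGroup F] [NormedSpace 𝕜 F]
  {f : 𝕜 → F} {c : 𝕜}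

theorem Function.Periodic.deriv (h : Periodic f c) : Periodic (deriv f) c := fun x => by
  rw [← deriv_comp_add_const, show (fun y => f (y + c)) = f from funext h]

theorem Function.Periodic.iteratedDeriv (h : Periodic f c) (n : ℕ) :
    Periodic (iteratedDeriv n f) c := by
  induction n with
  | zero => simpa using h
  | succ n ih => simpa [iteratedDeriv_succ] using ih.deriv

end Periodic

theorem Function.Periodic.integral_eq_zero_of_hasDerivAt {E : Type*} [NormedAddCommGroup E]
    [NormedSpace ℝ E] [CompleteSpace E] {F f : ℝ → E} {T : ℝ} (hF : Periodic F T)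
    (hderiv : ∀ x, HasDerivAt F (f x) x) (hint : IntervalIntegrable f MeasureTheory.volume 0 T) :
    ∫ x in (0 : ℝ)..T, f x = 0 := by
  rw [integral_eq_sub_of_hasDerivAt (fun x _ => hderiv x) hint, hF.eq, sub_self]

section PeriodicDerivatives

variable {𝕜 : Type*} [RCLike 𝕜] {u : ℝ → 𝕜} {T : ℝ}

theorem hasDerivAt_mul_iteratedDeriv_two_sub_deriv_sq (hu : ContDiff ℝ 3 u) (x : ℝ) :
    HasDerivAt (fun y => u y * iteratedDeriv 2 u y - deriv u y ^ 2 / 2)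
      (u x * iteratedDeriv 3 u x) x := by
  have hu₀ := (hu.differentiable (by norm_num) x).hasDerivAt
  have hu₁ := (hu.differentiable_iteratedDeriv 1 (by norm_num) x).hasDerivAt
  have hu₂ := (hu.differentiable_iteratedDeriv 2 (by norm_num) x).hasDerivAt
  rw [iteratedDeriv_one] at hu₁
  refine ((hu₀.fun_mul hu₂).fun_sub ((hu₁.fun_pow 2).div_const 2)).congr_deriv ?_
  have h₂ : iteratedDeriv 2 u = deriv (deriv u) := by rw [iteratedDeriv_succ, iteratedDeriv_one]
  rw [show iteratedDeriv 3 u = deriv (iteratedDeriv 2 u) from iteratedDeriv_succ, h₂]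
  push_cast
  ring

theorem integral_mul_iteratedDeriv_three_eq_zero_of_periodic (hper : Periodic u T)
    (hu : ContDiff ℝ 3 u) : ∫ x in (0 : ℝ)..T, u x * iteratedDeriv 3 u x = 0 :=
  Periodic.integral_eq_zero_of_hasDerivAt
    (fun x => by simp only [hper x, hper.iteratedDeriv 2 x, hper.deriv x])
    (hasDerivAt_mul_iteratedDeriv_two_sub_deriv_sq hu)
    ((hu.continuous.mul (hu.continuous_iteratedDeriv 3 le_rfl)).intervalIntegrable _ _)

theorem integral_pow_mul_deriv_eq_zero_of_periodic (hper : Periodic u T) (hu : ContDiff ℝ 1 u)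
    (n : ℕ) : ∫ x in (0 : ℝ)..T, u x ^ n * deriv u x = 0 := by
  have hu' := hu.continuous_deriv le_rfl
  have hexact : ∫ x in (0 : ℝ)..T, ((n + 1 : ℕ) : 𝕜) * (u x ^ n * deriv u x) = 0 :=
    Periodic.integral_eq_zero_of_hasDerivAt (fun x => by simp only [hper x])
      (fun x => ((hu.differentiable one_ne_zero x).hasDerivAt.fun_pow (n + 1)).congr_deriv
        (by push_cast [add_tsub_cancel_right]; ring))
      (by apply Continuous.intervalIntegrable; fun_prop)
  rwa [integral_const_mul, mul_eq_zero, or_iff_right (Nat.cast_ne_zero.2 n.succ_ne_zero)] at hexact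

end PeriodicDerivatives

theorem S4_vanishes_on_diagonal
    (u : ℝ → ℂ) (hu : ContDiff ℝ 3 u)
    (hper : ∀ x : ℝ, u (x + 1) = u x) :
    ∫ x in (0:ℝ)..1, (u x * iteratedDeriv 3 u x - 3 * u x ^ 3 * deriv u x) = 0 := by
  have hu' := hu.continuous_deriv (by norm_num)
  have hu''' := hu.continuous_iteratedDeriv 3 le_rfl
  have hcubic : ∫ x in (0 : ℝ)..1, 3 * u x ^ 3 * deriv u x = 0 := by
    simp_rw [mul_assoc]
    rw [integral_const_mul,
      integral_pow_mul_deriv_eq_zero_of_periodic hper (hu.of_le (by norm_num)), mul_zero]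
  rw [integral_sub (by apply Continuous.intervalIntegrable; fun_prop)
    (by apply Continuous.intervalIntegrable; fun_prop), hcubic, sub_zero,
    integral_mul_iteratedDeriv_three_eq_zero_of_periodic hper hu]
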